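/- arXiv:1701.02605 — 3 statements merged into one kernel-verified Lean document; each statement's English description precedes it below -/
import Mathlib

section
/- If rational numbers a, b, c, m, p, q, s satisfy ap - bq - cs = 1 and m^2 = -ap^3 + bq^3 + cs^3, then a(m+p)^4 + b(m-q)^4 + c(m-s)^4 = a(m-p)^4 + b(m+q)^4 + c(m+s)^4. -/
theorem stmt_9 (a b c m p q s : ℚ)
    (h1 : a*p - b*q - c*s = 1) (h2 : m^2 = -a*p^3 + b*q^3 + c*s^3) :
    a*(m+p)^4 + b*(m-q)^4 + c*(m-s)^4 = a*(m-p)^4 + b*(m+q)^4 + c*(m+s)^4 := by linear_combination (8*m^3)*h1 + (8*m)*h2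
end

section
/- If rational numbers a, b, c, d, m, p, q, s, r satisfy ap - bq - cs + dr = 1 and m^2 = -ap^3 + bq^3 + cs^3 - dr^3, then a(m+p)^4 + b(m-q)^4 + c(m-s)^4 + d(m+r)^4 = a(m-p)^4 + b(m+q)^4 + c(m+s)^4 + d(m-r)^4. -/
theorem stmt_11 (a b c d m p q s r : ℚ)
    (h1 : a*p - b*q - c*s + d*r = 1)
    (h2 : m^2 = -a*p^3 + b*q^3 + c*s^3 - d*r^3) :
    a*(m+p)^4 + b*(m-q)^4 + c*(m-s)^4 + d*(m+r)^4
      = a*(m-p)^4 + b*(m+q)^4 + c*(m+s)^4 + d*(m-r)^4 := by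
  linear_combination 8*m^3*h1 + 8*m*h2
end

section
/- If rational numbers a_1,…,a_n, m, p_1,…,p_n satisfy ∑_{i=1}^n a_i p_i = 1 and m^2 = −∑_{i=1}^n a_i p_i^3, then ∑_{i=1}^n a_i(m+p_i)^4 = ∑_{i=1}^n a_i(m−p_i)^4. -/
theorem stmt_13 (n : ℕ) (a p : Fin n → ℚ) (m : ℚ)
    (h1 : ∑ i, a i * p i = 1) (h2 : m^2 = -∑ i, a i * (p i)^3) :
    ∑ i, a i * (m + p i)^4 = ∑ i, a i * (m - p i)^4 := by
  rw [← sub_eq_zero, ← Finset.sum_sub_distrib]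
  have : ∀ i ∈ Finset.univ, a i * (m + p i)^4 - a i * (m - p i)^4
      = 8*m^3*(a i * p i) + 8*m*(a i * (p i)^3) := fun i _ => by ring
  rw [Finset.sum_congr rfl this, Finset.sum_add_distrib, ← Finset.mul_sum, ← Finset.mul_sum,
    h1]
  linear_combination (8*m) * h2
end
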